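/- arXiv:2404.10962 — 2 statements merged into one kernel-verified Lean document; each statement's English description precedes it below -/
import Mathlib

section
/- Let n ≥ 4 be an even integer and let H_n be the cocktail party graph on n vertices. Then every vertex of the dominating graph D(H_n) has even degree; in particular, D(H_n) is Eulerian. -/
open SimpleGraph

/-- `D` is a dominating set of `G`: every vertex not in `D` has a neighbour in `D`. -/
def IsDomSet {V : Type*} (G : SimpleGraph V) (D : Set V) : Prop :=
  ∀ v ∉ D, ∃ u ∈ D, G.Adj u v

/-- The dominating graph of `G`: vertices are dominating sets of `G`, two dominating
sets are adjacent iff their symmetric difference has exactly one element. -/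
def DomGraph {V : Type*} (G : SimpleGraph V) :
    SimpleGraph {D : Set V // IsDomSet G D} where
  Adj A B := (symmDiff A.1 B.1).ncard = 1
  symm := ⟨fun A B h => by
    have h' : (symmDiff A.1 B.1).ncard = 1 := h
    show (symmDiff B.1 A.1).ncard = 1
    rwa [symmDiff_comm]⟩
  loopless := ⟨fun A h => by
    have h' : (symmDiff A.1 A.1).ncard = 1 := h
    simp [symmDiff_self, Set.bot_eq_empty] at h'⟩

/-- The `k`-dominating graph of `G`: vertices are dominating sets of `G` of cardinality
at most `k`, two such sets are adjacent iff their symmetric difference has exactly one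
element. -/
def KDomGraph {V : Type*} (G : SimpleGraph V) (k : ℕ) :
    SimpleGraph {D : Set V // IsDomSet G D ∧ D.ncard ≤ k} where
  Adj A B := (symmDiff A.1 B.1).ncard = 1
  symm := ⟨fun A B h => by
    have h' : (symmDiff A.1 B.1).ncard = 1 := h
    show (symmDiff B.1 A.1).ncard = 1
    rwa [symmDiff_comm]⟩
  loopless := ⟨fun A h => by
    have h' : (symmDiff A.1 A.1).ncard = 1 := h
    simp [symmDiff_self, Set.bot_eq_empty] at h'⟩

/-- A graph is Eulerian iff every vertex has even degree and any two edges lie in the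
same connected component (i.e. at most one component contains an edge). -/
def IsEulerian {W : Type*} (H : SimpleGraph W) : Prop :=
  (∀ v : W, Even (H.neighborSet v).ncard) ∧
  ∀ u v x y : W, H.Adj u v → H.Adj x y → H.Reachable u x

/-- `G` is a cocktail party graph: the complete graph with a perfect matching removed,
i.e. there is a fixed-point-free involutive pairing `f` of the vertices such that two
distinct vertices are adjacent iff they are not paired. -/
def IsCocktailParty {V : Type*} (G : SimpleGraph V) : Prop :=
  ∃ f : V → V, Function.Involutive f ∧ (∀ v, f v ≠ v) ∧
    ∀ u v, G.Adj u v ↔ u ≠ v ∧ f u ≠ v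

/-!
In a cocktail party graph each vertex `v` misses only `v` and its partner, so a set is
dominating iff it has at least two elements. A dominating set of size at least three may
toggle any of the `n` vertices, one of size two may only add one of the `n - 2` others: both
degrees are even. Dominating sets are closed upwards, so each of them is joined to the full
vertex set by adding vertices one at a time, which makes the dominating graph connected.
-/

namespace Set

variable {α : Type*} {s : Set α} {a : α}

lemma symmDiff_singleton_of_mem (ha : a ∈ s) : symmDiff s {a} = s \ {a} := by
  ext x
  by_cases hx : x = a <;> simp [mem_symmDiff, hx, ha]

lemma symmDiff_singleton_of_notMem (ha : a ∉ s) : symmDiff s {a} = insert a s := by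
  ext x
  by_cases hx : x = a <;> simp [mem_symmDiff, hx, ha]

end Set

section DomGraph

variable {V : Type*} {G : SimpleGraph V}

lemma IsDomSet.mono {D E : Set V} (hD : IsDomSet G D) (hDE : D ⊆ E) : IsDomSet G E := by
  intro v hv
  obtain ⟨u, hu, huv⟩ := hD v fun h => hv (hDE h)
  exact ⟨u, hDE hu, huv⟩

lemma domGraph_adj_insert {D : Set V} (hD : IsDomSet G D) {a : V} (ha : a ∉ D) :
    (DomGraph G).Adj ⟨D, hD⟩ ⟨insert a D, hD.mono (Set.subset_insert a D)⟩ := by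
  show (symmDiff D (insert a D)).ncard = 1
  rw [← Set.symmDiff_singleton_of_notMem ha, symmDiff_symmDiff_cancel_left, Set.ncard_singleton]

lemma domGraph_reachable_union (D : {D : Set V // IsDomSet G D}) (S : Set V) (hS : S.Finite) :
    (DomGraph G).Reachable D ⟨D.1 ∪ S, D.2.mono Set.subset_union_left⟩ := by
  induction S, hS using Set.Finite.induction_on with
  | empty => simp
  | @insert a S _ _ ih =>
    by_cases ha : a ∈ D.1 ∪ S
    · simpa [Set.union_insert, Set.insert_eq_of_mem ha] using ih
    · simpa [Set.union_insert] using ih.trans (domGraph_adj_insert _ ha).reachable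

lemma domGraph_connected [Finite V] : (DomGraph G).Connected := by
  have hUniv : IsDomSet G Set.univ := fun v hv => absurd (Set.mem_univ v) hv
  have toUniv (D : {D : Set V // IsDomSet G D}) : (DomGraph G).Reachable D ⟨Set.univ, hUniv⟩ := by
    simpa using domGraph_reachable_union D Set.univ Set.finite_univ
  have : Nonempty {D : Set V // IsDomSet G D} := ⟨⟨Set.univ, hUniv⟩⟩
  exact ⟨fun A B => (toUniv A).trans (toUniv B).symm⟩

lemma ncard_neighborSet_domGraph (D : {D : Set V // IsDomSet G D}) :
    ((DomGraph G).neighborSet D).ncard = {v | IsDomSet G (symmDiff D.1 {v})}.ncard := by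
  symm
  refine Set.ncard_congr (fun v hv => ⟨symmDiff D.1 {v}, hv⟩) (fun v _ => ?_) ?_ ?_
  · show (symmDiff D.1 (symmDiff D.1 {v})).ncard = 1
    rw [symmDiff_symmDiff_cancel_left, Set.ncard_singleton]
  · intro v w _ _ h
    simpa using congrArg (·.1) h
  · rintro E (hE : (symmDiff D.1 E.1).ncard = 1)
    obtain ⟨v, hv⟩ := Set.ncard_eq_one.mp hE
    have hEv : E.1 = symmDiff D.1 {v} := by rw [← hv, symmDiff_symmDiff_cancel_left]
    exact ⟨v, show IsDomSet G _ from hEv ▸ E.2, Subtype.ext hEv.symm⟩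

end DomGraph

lemma isEulerian_of_preconnected {W : Type*} {H : SimpleGraph W} (hH : H.Preconnected)
    (heven : ∀ v, Even (H.neighborSet v).ncard) : IsEulerian H :=
  ⟨heven, fun u _ x _ _ _ => hH u x⟩

namespace IsCocktailParty

variable {V : Type*} {G : SimpleGraph V}

lemma isDomSet_iff [Finite V] [Nonempty V] (hG : IsCocktailParty G) (D : Set V) :
    IsDomSet G D ↔ 2 ≤ D.ncard := by
  obtain ⟨f, hf, hfix, hadj⟩ := hG
  constructor
  · intro hD
    by_contra! hlt
    obtain rfl | ⟨a, rfl⟩ := (Set.ncard_le_one_iff_eq).mp (Nat.le_of_lt_succ hlt)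
    · obtain ⟨u, hu, -⟩ := hD (Classical.arbitrary V) (Set.notMem_empty _)
      exact hu
    · obtain ⟨u, rfl, hu⟩ := hD (f a) (hfix a)
      exact ((hadj u (f u)).mp hu).2 rfl
  · intro hD v hv
    obtain ⟨a, b, ha, hb, hab⟩ := (Set.one_lt_ncard_iff).mp hD
    -- `f v` is the only non-neighbour of `v` besides `v` itself, so `a` or `b` dominates `v`
    by_cases hfa : f a = v
    · have hfb : f b ≠ v := fun hfb => hab (hf.injective (hfa.trans hfb.symm))
      exact ⟨b, hb, (hadj b v).mpr ⟨ne_of_mem_of_not_mem hb hv, hfb⟩⟩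
    · exact ⟨a, ha, (hadj a v).mpr ⟨ne_of_mem_of_not_mem ha hv, hfa⟩⟩

lemma even_ncard_neighborSet_domGraph [Fintype V] [Nonempty V] (hG : IsCocktailParty G)
    (hV : Even (Fintype.card V)) (D : {D : Set V // IsDomSet G D}) :
    Even ((DomGraph G).neighborSet D).ncard := by
  have hD : 2 ≤ D.1.ncard := (hG.isDomSet_iff D.1).mp D.2
  have toggle (v : V) : IsDomSet G (symmDiff D.1 {v}) ↔ v ∉ D.1 ∨ 3 ≤ D.1.ncard := by
    rw [hG.isDomSet_iff]
    by_cases hv : v ∈ D.1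
    · rw [Set.symmDiff_singleton_of_mem hv, Set.ncard_sdiff_singleton_of_mem hv]
      simp only [hv, not_true_eq_false, false_or]
      omega
    · rw [Set.symmDiff_singleton_of_notMem hv, Set.ncard_insert_of_notMem hv]
      simp only [hv, not_false_eq_true, true_or, iff_true]
      omega
  rw [ncard_neighborSet_domGraph]
  obtain h3 | h2 : 3 ≤ D.1.ncard ∨ D.1.ncard = 2 := by omega
  · have hUniv : {v | IsDomSet G (symmDiff D.1 {v})} = Set.univ := by
      ext v
      simp [toggle, h3]
    rwa [hUniv, Set.ncard_univ, Nat.card_eq_fintype_card]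
  · have hCompl : {v | IsDomSet G (symmDiff D.1 {v})} = D.1ᶜ := by
      ext v
      simp [toggle, h2]
    rw [hCompl, Set.ncard_compl, h2, Nat.card_eq_fintype_card]
    exact hV.tsub even_two

end IsCocktailParty

/-- Every vertex of the dominating graph of a cocktail party graph on an even number
`n ≥ 4` of vertices has even degree; in particular, the dominating graph is Eulerian. -/
theorem domGraph_cocktailParty_eulerian {V : Type*} [Fintype V] (G : SimpleGraph V)
    (hn : 4 ≤ Fintype.card V) (hne : Even (Fintype.card V)) (hG : IsCocktailParty G) :
    (∀ d : {D : Set V // IsDomSet G D}, Even ((DomGraph G).neighborSet d).ncard) ∧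
    IsEulerian (DomGraph G) := by
  have : Nonempty V := Fintype.card_pos_iff.mp (by omega)
  have heven := hG.even_ncard_neighborSet_domGraph hne
  exact ⟨heven, isEulerian_of_preconnected domGraph_connected.preconnected heven⟩
end

section
/- Let n and k be integers with n ≥ 2 and 1 < k < n. Then the k-dominating graph D_k(K_n) of the complete graph K_n is Eulerian if and only if n is odd and k = 2. -/
open SimpleGraph

/-!
In `K_n` the dominating sets are exactly the nonempty sets, so a vertex `A` of `D_k(K_n)` may
delete any of its elements iff `|A| ≥ 2` and add any other vertex iff `|A| < k`. Its degree is
therefore `n - 1` for a singleton, and `2` or `n` for a pair according as `k = 2` or `k > 2`.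
Every vertex shrinks to a singleton by deletions, and `{a}`, `{b}` are joined through `{a, b}`,
so `D_k(K_n)` is connected for `k ≥ 2`.
-/

theorem isDomSet_top_iff_nonempty {V : Type*} [Nonempty V] {D : Set V} :
    IsDomSet (⊤ : SimpleGraph V) D ↔ D.Nonempty := by
  refine ⟨fun hD => ?_, fun ⟨u, hu⟩ v hv => ⟨u, hu, fun huv => hv (huv ▸ hu)⟩⟩
  obtain ⟨v⟩ := ‹Nonempty V›
  by_cases hv : v ∈ D
  · exact ⟨v, hv⟩
  · obtain ⟨u, hu, -⟩ := hD v hv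
    exact ⟨u, hu⟩

theorem Set.symmDiff_singleton_of_mem_s15 {α : Type*} {s : Set α} {a : α} (ha : a ∈ s) :
    symmDiff s {a} = s \ {a} :=
  symmDiff_of_ge (Set.singleton_subset_iff.2 ha)

theorem Set.symmDiff_singleton_of_notMem_s15 {α : Type*} {s : Set α} {a : α} (ha : a ∉ s) :
    symmDiff s {a} = insert a s := by
  rw [(Set.disjoint_singleton_right.2 ha).symmDiff_eq_sup]
  exact Set.union_singleton

namespace KDomGraph

variable {V : Type*} {G : SimpleGraph V} {k : ℕ}

def legalToggles (G : SimpleGraph V) (k : ℕ) (A : Set V) : Set V :=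
  {x | IsDomSet G (symmDiff A {x}) ∧ (symmDiff A {x}).ncard ≤ k}

theorem adj_iff_exists_eq_symmDiff {A B : {D : Set V // IsDomSet G D ∧ D.ncard ≤ k}} :
    (KDomGraph G k).Adj A B ↔ ∃ x, B.1 = symmDiff A.1 {x} := by
  refine Set.ncard_eq_one.trans (exists_congr fun x => ⟨fun h => ?_, fun h => ?_⟩)
  · rw [← h, symmDiff_symmDiff_cancel_left]
  · rw [h, symmDiff_symmDiff_cancel_left]

theorem ncard_neighborSet (A : {D : Set V // IsDomSet G D ∧ D.ncard ≤ k}) :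
    ((KDomGraph G k).neighborSet A).ncard = (legalToggles G k A.1).ncard := by
  refine (Set.ncard_congr
    (fun x hx => (⟨symmDiff A.1 {x}, hx⟩ : {D : Set V // IsDomSet G D ∧ D.ncard ≤ k}))
    ?_ ?_ ?_).symm
  · exact fun x _ => adj_iff_exists_eq_symmDiff.2 ⟨x, rfl⟩
  · intro x y _ _ hxy
    simpa using congrArg (fun B : {D // _} => symmDiff A.1 B.1) hxy
  · intro B hB
    obtain ⟨x, hx⟩ := adj_iff_exists_eq_symmDiff.1 hB
    refine ⟨x, ?_, Subtype.ext hx.symm⟩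
    change IsDomSet G (symmDiff A.1 {x}) ∧ _
    rw [← hx]
    exact B.2

section Complete

variable [Finite V] [Nonempty V]

theorem mem_legalToggles_top_iff {A : Set V} (hA : A.ncard ≤ k) {x : V} :
    x ∈ legalToggles ⊤ k A ↔ x ∈ A ∧ 2 ≤ A.ncard ∨ x ∉ A ∧ A.ncard < k := by
  simp only [legalToggles, Set.mem_ofPred_eq, isDomSet_top_iff_nonempty]
  by_cases hx : x ∈ A
  · have hcard := Set.ncard_sdiff_singleton_add_one hx
    rw [Set.symmDiff_singleton_of_mem_s15 hx, ← Set.ncard_pos]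
    simp only [hx, true_and, not_true_eq_false, false_and, or_false]
    omega
  · rw [Set.symmDiff_singleton_of_notMem_s15 hx, Set.ncard_insert_of_notMem hx]
    simp [hx, Nat.succ_le_iff]

theorem ncard_legalToggles_top {A : Set V} (hA : A.ncard ≤ k) :
    (legalToggles ⊤ k A).ncard =
      (if 2 ≤ A.ncard then A.ncard else 0) +
        (if A.ncard < k then Nat.card V - A.ncard else 0) := by
  rw [← Set.ncard_inter_add_ncard_sdiff_eq_ncard (legalToggles ⊤ k A) A, ← Set.ncard_compl]
  congr 1
  · split_ifs with h
    · congr 1; ext x; simp +contextual [mem_legalToggles_top_iff hA, h]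
    · convert Set.ncard_empty V; ext x; simp +contextual [mem_legalToggles_top_iff hA, h]
  · split_ifs with h
    · congr 1; ext x; simp +contextual [mem_legalToggles_top_iff hA, h]
    · convert Set.ncard_empty V; ext x; simp +contextual [mem_legalToggles_top_iff hA, h]

theorem reachable_singleton_top (A : {D : Set V // IsDomSet ⊤ D ∧ D.ncard ≤ k}) {b : V}
    (hb : b ∈ A.1) (hbk : IsDomSet ⊤ {b} ∧ ({b} : Set V).ncard ≤ k) :
    (KDomGraph ⊤ k).Reachable A ⟨{b}, hbk⟩ := by
  obtain ⟨m, hm⟩ : ∃ m, A.1.ncard = m + 1 :=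
    Nat.exists_eq_add_one.2 ((Set.ncard_pos (Set.toFinite _)).2 ⟨b, hb⟩)
  induction m generalizing A with
  | zero =>
    obtain ⟨a, ha⟩ := Set.ncard_eq_one.1 hm
    obtain rfl : a = b := (Set.mem_singleton_iff.1 (ha ▸ hb)).symm
    obtain rfl : A = ⟨{a}, hbk⟩ := Subtype.ext ha
    rfl
  | succ m ih =>
    obtain ⟨c, hc, hcb⟩ := Set.exists_ne_of_one_lt_ncard (s := A.1) (by omega) b
    have hB : IsDomSet ⊤ (A.1 \ {c}) ∧ (A.1 \ {c}).ncard ≤ k := by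
      refine ⟨isDomSet_top_iff_nonempty.2 ⟨b, hb, hcb.symm⟩, ?_⟩
      exact (Set.ncard_le_ncard Set.sdiff_subset).trans A.2.2
    have hadj : (KDomGraph ⊤ k).Adj A ⟨_, hB⟩ :=
      adj_iff_exists_eq_symmDiff.2 ⟨c, (Set.symmDiff_singleton_of_mem_s15 hc).symm⟩
    refine hadj.reachable.trans (ih ⟨_, hB⟩ ⟨hb, hcb.symm⟩ ?_)
    have := Set.ncard_sdiff_singleton_add_one hc
    change (A.1 \ {c}).ncard = m + 1
    omega

theorem ncard_neighborSet_top (A : {D : Set V // IsDomSet ⊤ D ∧ D.ncard ≤ k}) :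
    ((KDomGraph ⊤ k).neighborSet A).ncard =
      (if 2 ≤ A.1.ncard then A.1.ncard else 0) +
        (if A.1.ncard < k then Nat.card V - A.1.ncard else 0) :=
  (ncard_neighborSet A).trans (ncard_legalToggles_top A.2.2)

theorem preconnected_top (hk : 2 ≤ k) : (KDomGraph (⊤ : SimpleGraph V) k).Preconnected := by
  intro A B
  obtain ⟨a, ha⟩ := isDomSet_top_iff_nonempty.1 A.2.1
  obtain ⟨b, hb⟩ := isDomSet_top_iff_nonempty.1 B.2.1
  have hsingleton (x : V) : IsDomSet ⊤ {x} ∧ ({x} : Set V).ncard ≤ k :=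
    ⟨isDomSet_top_iff_nonempty.2 (Set.singleton_nonempty x), by simp; omega⟩
  have hpair : IsDomSet ⊤ {a, b} ∧ ({a, b} : Set V).ncard ≤ k :=
    ⟨isDomSet_top_iff_nonempty.2 (Set.insert_nonempty a {b}),
      (Set.ncard_insert_le a {b}).trans (by simp; omega)⟩
  have hA := reachable_singleton_top A ha (hsingleton a)
  have hB := reachable_singleton_top B hb (hsingleton b)
  have hPa := reachable_singleton_top ⟨_, hpair⟩ (Set.mem_insert a {b}) (hsingleton a)
  have hPb := reachable_singleton_top ⟨_, hpair⟩ (Set.mem_insert_of_mem a rfl) (hsingleton b)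
  exact hA.trans (hPa.symm.trans (hPb.trans hB.symm))

end Complete

end KDomGraph

theorem kDomGraph_complete_eulerian_iff_general (n k : ℕ) (hn : 2 ≤ n) (hk1 : 1 < k) :
    IsEulerian (KDomGraph (⊤ : SimpleGraph (Fin n)) k) ↔ Odd n ∧ k = 2 := by
  have : Nonempty (Fin n) := Fin.pos_iff_nonempty.1 (by omega)
  obtain ⟨a, b, hab⟩ := (Fin.nontrivial_iff_two_le.2 hn).exists_pair_ne
  have hdeg := KDomGraph.ncard_neighborSet_top (V := Fin n) (k := k)
  simp only [Nat.card_eq_fintype_card, Fintype.card_fin] at hdeg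
  constructor
  · rintro ⟨hEven, -⟩
    have hsingleton := hEven ⟨{a}, isDomSet_top_iff_nonempty.2 (Set.singleton_nonempty a),
      by rw [Set.ncard_singleton]; omega⟩
    have hpair := hEven ⟨{a, b}, isDomSet_top_iff_nonempty.2 (Set.insert_nonempty a {b}),
      by rw [Set.ncard_pair hab]; omega⟩
    rw [hdeg] at hsingleton hpair
    simp only [Set.ncard_singleton, Set.ncard_pair hab] at hsingleton hpair
    rw [if_neg (by omega), if_pos hk1, Nat.even_iff] at hsingleton
    have hodd : Odd n := Nat.odd_iff.2 (by omega)
    refine ⟨hodd, by_contra fun hk2 => ?_⟩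
    rw [if_pos le_rfl, if_pos (by omega), Nat.even_iff] at hpair
    exact Nat.not_even_iff_odd.2 hodd (Nat.even_iff.2 (by omega))
  · rintro ⟨hodd, rfl⟩
    refine ⟨fun A => ?_, fun u _ x _ _ _ => KDomGraph.preconnected_top le_rfl u x⟩
    have hpos := (Set.ncard_pos (Set.toFinite _)).2 (isDomSet_top_iff_nonempty.1 A.2.1)
    have hle := A.2.2
    rw [hdeg]
    interval_cases A.1.ncard
    · simpa using Nat.Odd.sub_odd hodd odd_one
    · simp

/-- For `n ≥ 2` and `1 < k < n`, the `k`-dominating graph of the complete graph `K_n`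
is Eulerian iff `n` is odd and `k = 2`. -/
theorem kDomGraph_complete_eulerian_iff (n k : ℕ) (hn : 2 ≤ n) (hk1 : 1 < k) (hk2 : k < n) :
    IsEulerian (KDomGraph (⊤ : SimpleGraph (Fin n)) k) ↔ Odd n ∧ k = 2 :=
  kDomGraph_complete_eulerian_iff_general n k hn hk1
end
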